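/- Let a₁, a₂, a₃, b₁, b₂, b₃, θ₃, c be real numbers with a₁² + a₂² + a₃² ≤ 1, b₁² + b₂² + b₃² ≤ 1, θ₃² ≤ 1 and 0 ≤ c ≤ 1 − θ₃². Then (1 + θ₃ a₃)(1 + θ₃ b₃) + c·(a₁ b₁ + a₂ b₂) ≥ 0. -/

import Mathlib

/-!
Write `A = 1 + θ₃ a₃`, `B = 1 + θ₃ b₃` and `s = 1 - θ₃²`. The identity
`(1 + θ x)² - (1 - θ²)(1 - x²) = (θ + x)²` gives `s (a₁² + a₂²) ≤ A²` and likewise for `b`,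
so by the two-dimensional Cauchy–Schwarz inequality `|s (a₁ b₁ + a₂ b₂)| ≤ A B`. Since
`0 ≤ c ≤ s`, the term `c (a₁ b₁ + a₂ b₂)` is at least `min 0 (s (a₁ b₁ + a₂ b₂)) ≥ -A B`.
-/

theorem mul_add_mul_sq_le_sq_add_sq_mul {R : Type*} [CommRing R] [LinearOrder R]
    [IsStrictOrderedRing R] (a₁ a₂ b₁ b₂ : R) :
    (a₁ * b₁ + a₂ * b₂) ^ 2 ≤ (a₁ ^ 2 + a₂ ^ 2) * (b₁ ^ 2 + b₂ ^ 2) := by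
  nlinarith [sq_nonneg (a₁ * b₂ - a₂ * b₁)]

theorem one_add_mul_nonneg_of_sq_le_one {θ x : ℝ} (hθ : θ ^ 2 ≤ 1) (hx : x ^ 2 ≤ 1) :
    0 ≤ 1 + θ * x := by
  nlinarith [sq_nonneg (θ + x)]

theorem one_sub_sq_mul_le_sq_one_add_mul {θ x r : ℝ} (hθ : θ ^ 2 ≤ 1) (hr : r + x ^ 2 ≤ 1) :
    (1 - θ ^ 2) * r ≤ (1 + θ * x) ^ 2 := by
  have hr' : (1 - θ ^ 2) * r ≤ (1 - θ ^ 2) * (1 - x ^ 2) :=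
    mul_le_mul_of_nonneg_left (by linarith) (by linarith)
  nlinarith [sq_nonneg (θ + x)]

theorem neg_le_mul_of_neg_le_mul {x d c s : ℝ} (hx : 0 ≤ x) (hc0 : 0 ≤ c) (hcs : c ≤ s)
    (hsd : -x ≤ s * d) : -x ≤ c * d := by
  rcases le_or_gt 0 d with hd | hd
  · nlinarith [mul_nonneg hc0 hd]
  · nlinarith [mul_le_mul_of_nonpos_right hcs hd.le]

theorem section6_lemma
    (a₁ a₂ a₃ b₁ b₂ b₃ θ₃ c : ℝ)
    (ha : a₁ ^ 2 + a₂ ^ 2 + a₃ ^ 2 ≤ 1)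
    (hb : b₁ ^ 2 + b₂ ^ 2 + b₃ ^ 2 ≤ 1)
    (hc0 : 0 ≤ c) (hc1 : c ≤ 1 - θ₃ ^ 2) :
    0 ≤ (1 + θ₃ * a₃) * (1 + θ₃ * b₃) + c * (a₁ * b₁ + a₂ * b₂) := by
  have hθ : θ₃ ^ 2 ≤ 1 := by linarith
  have hA := one_add_mul_nonneg_of_sq_le_one hθ (x := a₃) (by nlinarith)
  have hB := one_add_mul_nonneg_of_sq_le_one hθ (x := b₃) (by nlinarith)
  have hsa := one_sub_sq_mul_le_sq_one_add_mul hθ ha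
  have hsb := one_sub_sq_mul_le_sq_one_add_mul hθ hb
  have hsq : ((1 - θ₃ ^ 2) * (a₁ * b₁ + a₂ * b₂)) ^ 2 ≤
      ((1 + θ₃ * a₃) * (1 + θ₃ * b₃)) ^ 2 :=
    calc ((1 - θ₃ ^ 2) * (a₁ * b₁ + a₂ * b₂)) ^ 2
        = (1 - θ₃ ^ 2) ^ 2 * (a₁ * b₁ + a₂ * b₂) ^ 2 := by ring
      _ ≤ (1 - θ₃ ^ 2) ^ 2 * ((a₁ ^ 2 + a₂ ^ 2) * (b₁ ^ 2 + b₂ ^ 2)) :=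
        mul_le_mul_of_nonneg_left (mul_add_mul_sq_le_sq_add_sq_mul _ _ _ _) (sq_nonneg _)
      _ = ((1 - θ₃ ^ 2) * (a₁ ^ 2 + a₂ ^ 2)) * ((1 - θ₃ ^ 2) * (b₁ ^ 2 + b₂ ^ 2)) := by ring
      _ ≤ (1 + θ₃ * a₃) ^ 2 * (1 + θ₃ * b₃) ^ 2 :=
        mul_le_mul hsa hsb (mul_nonneg (by linarith) (by positivity)) (sq_nonneg _)
      _ = ((1 + θ₃ * a₃) * (1 + θ₃ * b₃)) ^ 2 := by ring
  have hAB := mul_nonneg hA hB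
  have := neg_le_mul_of_neg_le_mul hAB hc0 hc1 (abs_le_of_sq_le_sq' hsq hAB).1
  linarith
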